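/- Let (E1,q1), (E2,q2), (E3,q3) be metric groups, let L be a Lagrangian subgroup of (E1 ⊕ E2, q1⁻¹ ⊕ q2) and let M be a Lagrangian subgroup of (E2 ⊕ E3, q2⁻¹ ⊕ q3). Then |M∘L| · |E2| = |M| · |L|, where M∘L := {(a1,a3) ∈ E1 ⊕ E3 : ∃ a2 ∈ E2, (a1,a2) ∈ L and (a2,a3) ∈ M}. -/

import Mathlib

/-- The symmetric bicharacter associated to a quadratic form `q` with values in `ℂˣ`. -/
def bq {M : Type*} [AddCommGroup M] (q : M → ℂˣ) (x y : M) : ℂˣ :=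
  q (x + y) * (q x)⁻¹ * (q y)⁻¹

/-- `(M, q)` is a metric group: `q` is even, `b_q` is biadditive and nondegenerate. -/
def IsMetric {M : Type*} [AddCommGroup M] (q : M → ℂˣ) : Prop :=
  (∀ x, q (-x) = q x) ∧
  (∀ x y z, bq q (x + y) z = bq q x z * bq q y z) ∧
  (∀ x y z, bq q x (y + z) = bq q x y * bq q x z) ∧
  (∀ x, (∀ y, bq q x y = 1) → x = 0)

/-- A subgroup `L` is Lagrangian for `q` if `q = 1` on `L` and `|L|² = |M|`. -/
def IsLagrangian {M : Type*} [AddCommGroup M] (q : M → ℂˣ) (L : AddSubgroup M) : Prop :=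
  (∀ x ∈ L, q x = 1) ∧ Nat.card L ^ 2 = Nat.card M

/-- Composition of Lagrangian correspondences (as a set). -/
def compL {E1 E2 E3 : Type*} [AddCommGroup E1] [AddCommGroup E2] [AddCommGroup E3]
    (L : AddSubgroup (E1 × E2)) (M : AddSubgroup (E2 × E3)) : Set (E1 × E3) :=
  {p | ∃ a2 : E2, (p.1, a2) ∈ L ∧ (a2, p.2) ∈ M}

/-!
Let `K ≤ L × M` consist of the pairs `(l, m)` with `l₂ = m₁`. Projecting `K` to the outer
coordinates has image `M∘L` and kernel `P = {b | (0, b) ∈ L ∧ (b, 0) ∈ M}`, while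
`(l, m) ↦ l₂ - m₁` maps `L × M` onto `L₂ + M₂` (the projections of `L` and `M` to `E₂`) with
kernel `K`; hence `|M∘L| · |P| · |L₂ + M₂| = |L| · |M|`, for arbitrary correspondences.
A Lagrangian subgroup is its own orthogonal, which identifies `P` with the
`b_{q₂}`-orthogonal of `L₂ + M₂`, and orthogonality of characters gives `|H^⊥| · |H| = |E|`
for every subgroup `H` of a metric group `E`.
-/

namespace AddSubgroup

variable {G G' : Type*} [AddGroup G] [AddGroup G']

theorem card_map_mul_card_ker_inf (f : G →+ G') (K : AddSubgroup G) :
    Nat.card (K.map f) * Nat.card (f.ker ⊓ K : AddSubgroup G) = Nat.card K := by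
  have h := relIndex_mul_relIndex ⊥ (f.ker ⊓ K) K bot_le inf_le_right
  rwa [relIndex_bot_left, relIndex_bot_left, inf_relIndex_right, relIndex_ker, mul_comm] at h

end AddSubgroup

section Correspondence

variable (A B C : Type*) [AddCommGroup A] [AddCommGroup B] [AddCommGroup C]

def junctionDefect : (A × B) × (B × C) →+ B :=
  AddMonoidHom.mk' (fun p => p.1.2 - p.2.1) fun _ _ => add_sub_add_comm _ _ _ _

def outerProjection : (A × B) × (B × C) →+ A × C :=
  AddMonoidHom.mk' (fun p => (p.1.1, p.2.2)) fun _ _ => rfl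

def doubleInclusion : B →+ (A × B) × (B × C) :=
  AddMonoidHom.mk' (fun x => ((0, x), (x, 0))) fun _ _ => by simp

variable {A B C} (L : AddSubgroup (A × B)) (M : AddSubgroup (B × C))

theorem map_junctionDefect_prod :
    (L.prod M).map (junctionDefect A B C)
      = L.map (AddMonoidHom.snd A B) ⊔ M.map (AddMonoidHom.fst B C) := by
  ext x
  simp only [AddSubgroup.mem_map, AddSubgroup.mem_prod, AddSubgroup.mem_sup]
  constructor
  · rintro ⟨⟨l, m⟩, ⟨hl, hm⟩, rfl⟩
    exact ⟨l.2, ⟨l, hl, rfl⟩, -m.1, ⟨-m, neg_mem hm, rfl⟩, (sub_eq_add_neg _ _).symm⟩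
  · rintro ⟨_, ⟨l, hl, rfl⟩, _, ⟨m, hm, rfl⟩, rfl⟩
    exact ⟨(l, -m), ⟨hl, neg_mem hm⟩, sub_neg_eq_add _ _⟩

theorem coe_map_outerProjection_ker_inf :
    ((((junctionDefect A B C).ker ⊓ L.prod M).map (outerProjection A B C) :
      AddSubgroup (A × C)) : Set (A × C)) = compL L M := by
  ext ⟨a, c⟩
  simp only [SetLike.mem_coe, AddSubgroup.mem_map, AddSubgroup.mem_inf, AddMonoidHom.mem_ker,
    AddSubgroup.mem_prod, compL, Set.mem_ofPred_eq]
  constructor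
  · rintro ⟨⟨⟨a', b⟩, ⟨b', c'⟩⟩, ⟨hbb', hl, hm⟩, h⟩
    obtain ⟨rfl, rfl⟩ := Prod.mk.inj h
    obtain rfl : b = b' := sub_eq_zero.mp hbb'
    exact ⟨b, hl, hm⟩
  · rintro ⟨b, hl, hm⟩
    exact ⟨((a, b), (b, c)), ⟨sub_self b, hl, hm⟩, rfl⟩

theorem ker_outerProjection_inf :
    (outerProjection A B C).ker ⊓ ((junctionDefect A B C).ker ⊓ L.prod M)
      = (L.comap (AddMonoidHom.inr A B) ⊓ M.comap (AddMonoidHom.inl B C)).map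
          (doubleInclusion A B C) := by
  ext ⟨⟨a, b⟩, ⟨b', c⟩⟩
  simp only [AddSubgroup.mem_map, AddSubgroup.mem_inf, AddMonoidHom.mem_ker,
    AddSubgroup.mem_prod, AddSubgroup.mem_comap]
  constructor
  · rintro ⟨h0, hbb', hl, hm⟩
    obtain ⟨rfl, rfl⟩ := Prod.mk.inj h0
    obtain rfl : b = b' := sub_eq_zero.mp hbb'
    exact ⟨b, ⟨hl, hm⟩, rfl⟩
  · rintro ⟨x, ⟨hl, hm⟩, h⟩
    simp only [doubleInclusion, AddMonoidHom.mk'_apply, Prod.mk.injEq] at h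
    obtain ⟨⟨rfl, rfl⟩, rfl, rfl⟩ := h
    exact ⟨rfl, sub_self _, hl, hm⟩

theorem card_compL_mul_card_inf_mul_card_sup :
    Nat.card (compL L M)
      * Nat.card (L.comap (AddMonoidHom.inr A B) ⊓ M.comap (AddMonoidHom.inl B C) : AddSubgroup B)
      * Nat.card (L.map (AddMonoidHom.snd A B) ⊔ M.map (AddMonoidHom.fst B C) : AddSubgroup B)
      = Nat.card L * Nat.card M := by
  have hcomp : Nat.card (compL L M)
      = Nat.card (((junctionDefect A B C).ker ⊓ L.prod M).map (outerProjection A B C)) := by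
    rw [← coe_map_outerProjection_ker_inf]
    rfl
  have hinf : Nat.card ((outerProjection A B C).ker ⊓ ((junctionDefect A B C).ker ⊓ L.prod M) :
        AddSubgroup ((A × B) × (B × C)))
      = Nat.card (L.comap (AddMonoidHom.inr A B) ⊓ M.comap (AddMonoidHom.inl B C) :
        AddSubgroup B) := by
    rw [ker_outerProjection_inf]
    exact AddSubgroup.card_map_of_injective fun x y h => congrArg (·.1.2) h
  rw [hcomp, ← hinf, AddSubgroup.card_map_mul_card_ker_inf, ← map_junctionDefect_prod, mul_comm,
    AddSubgroup.card_map_mul_card_ker_inf, Nat.card_congr (L.prodEquiv M).toEquiv, Nat.card_prod]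

end Correspondence

section MetricGroup

variable {E : Type*} [AddCommGroup E]

theorem bq_comm (q : E → ℂˣ) (x y : E) : bq q x y = bq q y x := by
  rw [bq, bq, add_comm, mul_right_comm]

theorem bq_inv (q : E → ℂˣ) (x y : E) : bq q⁻¹ x y = (bq q x y)⁻¹ := by
  simp only [bq, Pi.inv_apply, mul_inv]

theorem bq_prod {A B : Type*} [AddCommGroup A] [AddCommGroup B] (qa : A → ℂˣ) (qb : B → ℂˣ)
    (x y : A × B) :
    bq (fun p : A × B => qa p.1 * qb p.2) x y = bq qa x.1 y.1 * bq qb x.2 y.2 := by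
  simp only [bq, Prod.fst_add, Prod.snd_add, mul_inv]
  simp only [mul_assoc, mul_left_comm]

def orthogonal (q : E → ℂˣ) (S : Set E) : Set E :=
  {x | ∀ y ∈ S, bq q x y = 1}

theorem orthogonal_inv (q : E → ℂˣ) (S : Set E) : orthogonal q⁻¹ S = orthogonal q S := by
  simp only [orthogonal, bq_inv, inv_eq_one]

namespace IsMetric

variable {q : E → ℂˣ}

theorem map_zero (hq : IsMetric q) : q 0 = 1 := by
  have h := hq.2.1 0 0 0
  rw [add_zero, left_eq_mul] at h
  simpa [bq] using h

theorem bq_zero_left (hq : IsMetric q) (y : E) : bq q 0 y = 1 := by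
  simp [bq, hq.map_zero]

theorem bq_zero_right (hq : IsMetric q) (x : E) : bq q x 0 = 1 := by
  rw [bq_comm, hq.bq_zero_left]

theorem inv (hq : IsMetric q) : IsMetric q⁻¹ := by
  obtain ⟨heven, hleft, hright, hnondeg⟩ := hq
  refine ⟨fun x => by simp only [Pi.inv_apply, heven], fun x y z => ?_, fun x y z => ?_,
    fun x hx => hnondeg x fun y => ?_⟩
  · simp only [bq_inv, hleft, mul_inv]
  · simp only [bq_inv, hright, mul_inv]
  · simpa only [bq_inv, inv_eq_one] using hx y

theorem prod {A B : Type*} [AddCommGroup A] [AddCommGroup B] {qa : A → ℂˣ} {qb : B → ℂˣ}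
    (ha : IsMetric qa) (hb : IsMetric qb) : IsMetric (fun p : A × B => qa p.1 * qb p.2) := by
  refine ⟨fun x => by simp only [Prod.fst_neg, Prod.snd_neg, ha.1, hb.1], fun x y z => ?_,
    fun x y z => ?_, fun x hx => Prod.ext (ha.2.2.2 _ fun a => ?_) (hb.2.2.2 _ fun b => ?_)⟩
  · simp only [bq_prod, Prod.fst_add, Prod.snd_add, ha.2.1, hb.2.1]
    simp only [mul_assoc, mul_left_comm]
  · simp only [bq_prod, Prod.fst_add, Prod.snd_add, ha.2.2.1, hb.2.2.1]
    simp only [mul_assoc, mul_left_comm]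
  · simpa [bq_prod, hb.bq_zero_right] using hx (a, 0)
  · simpa [bq_prod, ha.bq_zero_right] using hx (0, b)

theorem orthogonal_sup (hq : IsMetric q) (H K : AddSubgroup E) :
    orthogonal q ↑(H ⊔ K) = orthogonal q H ∩ orthogonal q K := by
  ext x
  simp only [orthogonal, Set.mem_inter_iff, Set.mem_ofPred_eq, SetLike.mem_coe]
  refine ⟨fun h => ⟨fun y hy => h y (AddSubgroup.mem_sup_left hy),
    fun y hy => h y (AddSubgroup.mem_sup_right hy)⟩, fun ⟨hH, hK⟩ y hy => ?_⟩
  obtain ⟨a, ha, b, hb, rfl⟩ := AddSubgroup.mem_sup.mp hy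
  rw [hq.2.2.1, hH a ha, hK b hb, one_mul]

def bqChar (hq : IsMetric q) (x : E) : AddChar E ℂ where
  toFun y := bq q x y
  map_zero_eq_one' := by simp [hq.bq_zero_right]
  map_add_eq_mul' y z := by simp [hq.2.2.1]

theorem bqChar_apply (hq : IsMetric q) (x y : E) : hq.bqChar x y = bq q x y := rfl

theorem bqChar_eq_zero_iff (hq : IsMetric q) (x : E) : hq.bqChar x = 0 ↔ x = 0 := by
  simp only [AddChar.ext_iff, AddChar.zero_apply, bqChar_apply, Units.val_eq_one]
  exact ⟨hq.2.2.2 x, fun hx y => hx ▸ hq.bq_zero_left y⟩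

theorem compAddMonoidHom_bqChar_eq_zero_iff (hq : IsMetric q) (H : AddSubgroup E) (x : E) :
    (hq.bqChar x).compAddMonoidHom H.subtype = 0 ↔ x ∈ orthogonal q H := by
  simp [AddChar.ext_iff, orthogonal, bqChar_apply]

theorem card_orthogonal_mul_card [Finite E] (hq : IsMetric q) (H : AddSubgroup E) :
    Nat.card (orthogonal q H) * Nat.card H = Nat.card E := by
  classical
  have := Fintype.ofFinite E
  have hrow (x : E) :
      ∑ h : H, hq.bqChar x h = if x ∈ orthogonal q H then (Nat.card H : ℂ) else 0 := by
    simpa [compAddMonoidHom_bqChar_eq_zero_iff] using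
      AddChar.sum_eq_ite ((hq.bqChar x).compAddMonoidHom H.subtype)
  have hcol (h : H) : ∑ x, hq.bqChar x h = if h = 0 then (Nat.card E : ℂ) else 0 := by
    have hswap (x : E) : hq.bqChar x h = hq.bqChar h x := by
      rw [bqChar_apply, bqChar_apply, bq_comm]
    rw [Finset.sum_congr rfl fun x _ => hswap x]
    simpa [bqChar_eq_zero_iff] using AddChar.sum_eq_ite (hq.bqChar h)
  have hC : (Nat.card (orthogonal q H) * Nat.card H : ℂ) = Nat.card E :=
    calc (Nat.card (orthogonal q H) * Nat.card H : ℂ) = ∑ x, ∑ h : H, hq.bqChar x h := by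
          simp only [hrow, Finset.sum_ite, Finset.sum_const, nsmul_eq_mul, mul_zero, add_zero,
            Nat.card_eq_fintype_card, Fintype.card_subtype]
      _ = ∑ h : H, ∑ x, hq.bqChar x h := Finset.sum_comm
      _ = Nat.card E := by simp only [hcol, Finset.sum_ite_eq', Finset.mem_univ, if_true]
  exact_mod_cast hC

end IsMetric

end MetricGroup

theorem IsLagrangian.orthogonal_eq {E : Type*} [AddCommGroup E] [Finite E] {q : E → ℂˣ}
    {L : AddSubgroup E} (hq : IsMetric q) (hL : IsLagrangian q L) : orthogonal q L = L := by
  have hsub : (L : Set E) ⊆ orthogonal q L := fun x hx y hy => by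
    rw [bq, hL.1 _ (add_mem hx hy), hL.1 x hx, hL.1 y hy, inv_one, mul_one, mul_one]
  have hcard : Nat.card (orthogonal q L) = Nat.card L := by
    have h := hq.card_orthogonal_mul_card L
    rw [← hL.2, sq] at h
    exact Nat.eq_of_mul_eq_mul_right Nat.card_pos h
  refine (Set.eq_of_subset_of_ncard_le hsub ?_ (Set.toFinite _)).symm
  rw [← Nat.card_coe_set_eq, ← Nat.card_coe_set_eq, hcard]
  rfl

section LagrangianCorrespondence

variable {A B : Type*} [AddCommGroup A] [AddCommGroup B] [Finite A] [Finite B]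
  {qa : A → ℂˣ} {qb : B → ℂˣ} {L : AddSubgroup (A × B)}

theorem IsLagrangian.coe_comap_inr (ha : IsMetric qa) (hb : IsMetric qb)
    (hL : IsLagrangian (fun p : A × B => qa p.1 * qb p.2) L) :
    (L.comap (AddMonoidHom.inr A B) : Set B) = orthogonal qb (L.map (AddMonoidHom.snd A B)) := by
  ext x
  rw [SetLike.mem_coe, AddSubgroup.mem_comap, AddMonoidHom.inr_apply, ← SetLike.mem_coe,
    ← hL.orthogonal_eq (ha.prod hb)]
  simp [orthogonal, bq_prod, ha.bq_zero_left, forall_comm (α := A)]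

theorem IsLagrangian.coe_comap_inl (ha : IsMetric qa) (hb : IsMetric qb)
    (hL : IsLagrangian (fun p : A × B => qa p.1 * qb p.2) L) :
    (L.comap (AddMonoidHom.inl A B) : Set A) = orthogonal qa (L.map (AddMonoidHom.fst A B)) := by
  ext x
  rw [SetLike.mem_coe, AddSubgroup.mem_comap, AddMonoidHom.inl_apply, ← SetLike.mem_coe,
    ← hL.orthogonal_eq (ha.prod hb)]
  simp [orthogonal, bq_prod, hb.bq_zero_left]

end LagrangianCorrespondence

/-- For Lagrangian correspondences `L ≤ E1 ⊕ E2` and `M ≤ E2 ⊕ E3`,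
`|M∘L| · |E2| = |M| · |L|`. -/
theorem stmt8 {E1 E2 E3 : Type*} [AddCommGroup E1] [Fintype E1]
    [AddCommGroup E2] [Fintype E2] [AddCommGroup E3] [Fintype E3]
    (q1 : E1 → ℂˣ) (q2 : E2 → ℂˣ) (q3 : E3 → ℂˣ)
    (h1 : IsMetric q1) (h2 : IsMetric q2) (h3 : IsMetric q3)
    (L : AddSubgroup (E1 × E2)) (M : AddSubgroup (E2 × E3))
    (hL : IsLagrangian (fun p : E1 × E2 => (q1 p.1)⁻¹ * q2 p.2) L)
    (hM : IsLagrangian (fun p : E2 × E3 => (q2 p.1)⁻¹ * q3 p.2) M) :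
    Nat.card (compL L M) * Nat.card E2 = Nat.card M * Nat.card L := by
  set P := L.comap (AddMonoidHom.inr E1 E2) ⊓ M.comap (AddMonoidHom.inl E2 E3)
  set S := L.map (AddMonoidHom.snd E1 E2) ⊔ M.map (AddMonoidHom.fst E2 E3)
  have hP : (P : Set E2) = orthogonal q2 S := by
    rw [AddSubgroup.coe_inf, hL.coe_comap_inr (qa := q1⁻¹) h1.inv h2,
      hM.coe_comap_inl (qa := q2⁻¹) h2.inv h3, orthogonal_inv, h2.orthogonal_sup]
  have hcard : Nat.card P * Nat.card S = Nat.card E2 := by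
    rw [← h2.card_orthogonal_mul_card S, ← hP]
    rfl
  rw [← hcard, ← mul_assoc, card_compL_mul_card_inf_mul_card_sup, mul_comm]
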